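/- Let k ≥ 2 and let G be a finite Eulerian (s,k)-edge-connected graph with deg(s) ≥ 2. Then the complement of the lifting graph L(G, s, k) is disconnected. -/

import Mathlib

universe u v

/-- A loopless multigraph on vertex type `V` with edge type `E`:
each edge `e` has two distinct endpoints `fst e` and `snd e`. -/
structure Multigraph (V : Type u) (E : Type v) where
  fst : E → V
  snd : E → V
  loopless : ∀ e, fst e ≠ snd e

namespace Multigraph

variable {V : Type u} {E : Type v}

/-- The edge `e` has endpoints `a` and `b`. -/
def Inc (G : Multigraph V E) (e : E) (a b : V) : Prop :=
  (G.fst e = a ∧ G.snd e = b) ∨ (G.fst e = b ∧ G.snd e = a)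

/-- The edge `e` is incident with the vertex `s`. -/
def IncVert (G : Multigraph V E) (s : V) (e : E) : Prop :=
  G.fst e = s ∨ G.snd e = s

/-- The degree of a vertex: the number of edges incident with it. -/
noncomputable def degree (G : Multigraph V E) (s : V) : ℕ :=
  {e : E | G.IncVert s e}.ncard

/-- A graph is locally finite if every vertex is incident with only finitely many edges. -/
def LocallyFinite (G : Multigraph V E) : Prop :=
  ∀ s : V, {e : E | G.IncVert s e}.Finite

/-- `δ(S)`: the set of edges with exactly one endpoint in `S`. -/
def edgeCut (G : Multigraph V E) (S : Set V) : Set E :=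
  {e : E | (G.fst e ∈ S ∧ G.snd e ∉ S) ∨ (G.fst e ∉ S ∧ G.snd e ∈ S)}

open Classical in
/-- The endpoint of `e` other than `s` (for `e` incident with `s`). -/
noncomputable def other (G : Multigraph V E) (s : V) (e : E) : V :=
  if G.fst e = s then G.snd e else G.fst e

open Classical in
/-- For an edge of `δ(S)`, its endpoint outside `S`. -/
noncomputable def outEnd (G : Multigraph V E) (S : Set V) (e : E) : V :=
  if G.fst e ∈ S then G.snd e else G.fst e

/-- Walks in a multigraph. -/
inductive Walk (G : Multigraph V E) : V → V → Type (max u v)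
  | nil (x : V) : Walk G x x
  | cons {x y z : V} (e : E) (h : G.Inc e x y) (p : Walk G y z) : Walk G x z

namespace Walk

variable {G : Multigraph V E}

/-- The list of edges used by a walk. -/
def edges : ∀ {x y : V}, G.Walk x y → List E
  | _, _, .nil _ => []
  | _, _, .cons e _ p => e :: edges p

/-- The list of vertices visited by a walk. -/
def support : ∀ {x y : V}, G.Walk x y → List V
  | _, y, .nil _ => [y]
  | x, _, .cons _ _ p => x :: support p

/-- A walk is a path if it has no repeated vertices. -/
def IsPath {x y : V} (p : G.Walk x y) : Prop := p.support.Nodup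

end Walk

/-- There are `k` pairwise edge-disjoint paths from `x` to `y`. -/
def EdgeDisjointPaths (G : Multigraph V E) (k : ℕ) (x y : V) : Prop :=
  ∃ P : Fin k → G.Walk x y,
    (∀ i, (P i).IsPath) ∧ ∀ i j, i ≠ j → List.Disjoint (P i).edges (P j).edges

/-- `G` is `k`-edge-connected: between any two distinct vertices there are `k`
pairwise edge-disjoint paths. -/
def EdgeConnected (G : Multigraph V E) (k : ℕ) : Prop :=
  ∀ x y : V, x ≠ y → G.EdgeDisjointPaths k x y

/-- `G` is `(s,k)`-edge-connected: between any two distinct vertices different from `s`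
there are `k` pairwise edge-disjoint paths (possibly through `s`). -/
def SEdgeConnected (G : Multigraph V E) (s : V) (k : ℕ) : Prop :=
  ∀ x y : V, x ≠ s → y ≠ s → x ≠ y → G.EdgeDisjointPaths k x y

/-- An orientation of `G` assigns to each edge a tail and a head (its two endpoints). -/
structure Orientation (G : Multigraph V E) where
  tail : E → V
  head : E → V
  inc : ∀ e, G.Inc e (tail e) (head e)

namespace Orientation

variable {G : Multigraph V E}

/-- Directed walks with respect to an orientation. -/
inductive DiWalk (o : G.Orientation) : V → V → Type (max u v)
  | nil (x : V) : DiWalk o x x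
  | cons {x y z : V} (e : E) (ht : o.tail e = x) (hh : o.head e = y) (p : DiWalk o y z) :
      DiWalk o x z

namespace DiWalk

variable {o : G.Orientation}

/-- The list of arcs used by a directed walk. -/
def edges : ∀ {x y : V}, o.DiWalk x y → List E
  | _, _, .nil _ => []
  | _, _, .cons e _ _ p => e :: edges p

/-- The list of vertices visited by a directed walk. -/
def support : ∀ {x y : V}, o.DiWalk x y → List V
  | _, y, .nil _ => [y]
  | x, _, .cons _ _ _ p => x :: support p

/-- A directed walk is a directed path if it has no repeated vertices. -/
def IsPath {x y : V} (p : o.DiWalk x y) : Prop := p.support.Nodup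

end DiWalk

/-- An orientation is `k`-arc-connected if from any vertex to any other there are `k`
pairwise arc-disjoint directed paths. -/
def ArcConnected (o : G.Orientation) (k : ℕ) : Prop :=
  ∀ x y : V, ∃ P : Fin k → o.DiWalk x y,
    (∀ i, (P i).IsPath) ∧ ∀ i j, i ≠ j → List.Disjoint (P i).edges (P j).edges

end Orientation

/-- A ray: a one-way infinite path. -/
structure Ray (G : Multigraph V E) where
  vert : ℕ → V
  edge : ℕ → E
  inc : ∀ n, G.Inc (edge n) (vert n) (vert (n + 1))
  inj : Function.Injective vert

/-- Two rays are edge-disjoint. -/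
def Ray.EdgeDisjoint {G : Multigraph V E} (R R' : G.Ray) : Prop :=
  ∀ m n, R.edge m ≠ R'.edge n

/-- A walk is edge-disjoint from a ray. -/
def Walk.EdgeDisjointRay {G : Multigraph V E} {x y : V} (p : G.Walk x y) (R : G.Ray) : Prop :=
  ∀ e ∈ p.edges, ∀ n, R.edge n ≠ e

/-- Two rays are equivalent (belong to the same end) if there are infinitely many
pairwise vertex-disjoint paths between them. -/
def RayEquiv (G : Multigraph V E) (R R' : G.Ray) : Prop :=
  ∃ P : ℕ → (Σ (m n : ℕ), G.Walk (R.vert m) (R'.vert n)),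
    (∀ i, (P i).2.2.IsPath) ∧
      ∀ i j, i ≠ j → List.Disjoint (P i).2.2.support (P j).2.2.support

/-- A graph is one-ended if it has a ray and any two rays are equivalent. -/
def OneEnded (G : Multigraph V E) : Prop :=
  Nonempty G.Ray ∧ ∀ R R' : G.Ray, G.RayEquiv R R'

end Multigraph
/-- A multigraph on the vertex type `W`, with its edge type bundled. -/
structure GraphOn (W : Type u) : Type (u + 1) where
  E : Type u
  graph : Multigraph W E

namespace Multigraph

variable {W F : Type u}

/-- The graph obtained from `G` by lifting the pair of edges `e₁, e₂` at `s`: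
delete `e₁` and `e₂`, and add an edge between their non-`s` endpoints if these differ
(nothing is added if they coincide). -/
noncomputable def lift (G : Multigraph W F) (s : W) (e₁ e₂ : F) : GraphOn W where
  E := {e : F // e ≠ e₁ ∧ e ≠ e₂} ⊕ {_p : PUnit.{u + 1} // G.other s e₁ ≠ G.other s e₂}
  graph :=
    { fst := Sum.elim (fun e => G.fst e.1) fun _ => G.other s e₁
      snd := Sum.elim (fun e => G.snd e.1) fun _ => G.other s e₂
      loopless := by
        rintro (e | p)
        · exact G.loopless e.1
        · exact p.2 }

/-- The pair of edges `e₁, e₂` incident with `s` is `k`-liftable: after lifting it,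
there are `k` pairwise edge-disjoint paths between any two vertices different from `s`. -/
def IsLiftable (G : Multigraph W F) (s : W) (k : ℕ) (e₁ e₂ : F) : Prop :=
  e₁ ≠ e₂ ∧ G.IncVert s e₁ ∧ G.IncVert s e₂ ∧ (G.lift s e₁ e₂).graph.SEdgeConnected s k

/-- The `k`-lifting graph `L(G, s, k)`: vertices are the edges of `G` incident with `s`,
two being adjacent iff they form a `k`-liftable pair. -/
noncomputable def liftingGraph (G : Multigraph W F) (s : W) (k : ℕ) :
    SimpleGraph {e : F // G.IncVert s e} :=
  SimpleGraph.fromRel fun e f => G.IsLiftable s k e.1 f.1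

end Multigraph

/-- `x` is an isolated vertex of the simple graph `L`. -/
def SimpleGraph.IsIsolatedVertex {α : Type*} (L : SimpleGraph α) (x : α) : Prop :=
  ∀ y, ¬ L.Adj x y

/-- `L` is the union of an isolated vertex and a balanced complete bipartite graph. -/
def SimpleGraph.IsIsolatedPlusBalancedCompleteBipartite {α : Type*} (L : SimpleGraph α) : Prop :=
  ∃ (x : α) (A B : Set α),
    x ∉ A ∧ x ∉ B ∧ A ∩ B = ∅ ∧ A ∪ B = {x}ᶜ ∧ A.ncard = B.ncard ∧
      ∀ a b, L.Adj a b ↔ (a ∈ A ∧ b ∈ B) ∨ (a ∈ B ∧ b ∈ A)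

/-!
Call `S ⊆ V ∖ {s}` with `∅ ≠ S ≠ V ∖ {s}` tight if `d(S) ≤ k + 1`. Such sets have `d(S) ≥ k`,
and cuts of an Eulerian graph are even, so tight sets are those of least possible cut. For
`s ∉ S`, lifting `su, sv` lowers `d(S)` by two if `S` contains `u` and `v`, and does not lower it
otherwise; so by Menger's theorem the pair is liftable unless a tight set contains `u` and `v`.

If no tight set contains a neighbour of `s`, every pair is liftable. Otherwise let `X` be a maximal
tight set containing a neighbour of `s`; as `deg s ≥ 2` and `d(X) ≤ k + 1`, some neighbour lies
outside `X`. For `u ∈ X` and `v ∉ X`, a tight set `Z ∋ u, v` is impossible: if some vertex lies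
outside `X ∪ Z ∪ {s}`, submodularity of `d` makes `X ∪ Z` tight, against maximality; otherwise
posimodularity and parity leave no room for the edge `su` between `X ∩ Z` and `s`. Hence every
edge `su` with `u ∈ X` is liftable with every edge `sv` with `v ∉ X`, and no edge of the
complement of `L(G, s, k)` crosses this partition.

The hard direction of Menger's theorem is proved by augmenting unit-capacity flows.
-/

theorem Set.ncard_eq_sum_ite {α : Type*} [Fintype α] (A : Set α) [DecidablePred (· ∈ A)] :
    A.ncard = ∑ a, if a ∈ A then 1 else 0 := by
  rw [Set.ncard_eq_toFinset_card', Set.toFinset_card, Fintype.card_subtype, Finset.card_filter]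

theorem Fin.pairwise_cons {α : Type*} {r : α → α → Prop} {n : ℕ} {a : α} {f : Fin n → α}
    (ha : ∀ i, r a (f i)) (ha' : ∀ i, r (f i) a) (hf : Pairwise fun i j => r (f i) (f j)) :
    Pairwise fun i j =>
      r ((Fin.cons a f : Fin (n + 1) → α) i) ((Fin.cons a f : Fin (n + 1) → α) j) := by
  intro i j hij
  induction i using Fin.cases <;> induction j using Fin.cases
  · exact absurd rfl hij
  · exact ha _
  · exact ha' _
  · exact hf (fun h => hij (congrArg Fin.succ h))

theorem SimpleGraph.not_connected_compl_of_forall_adj {α : Type*} {L : SimpleGraph α}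
    {A : Set α} {a b : α} (ha : a ∈ A) (hb : b ∉ A) (hA : ∀ p ∈ A, ∀ q ∉ A, L.Adj p q) :
    ¬ Lᶜ.Connected := fun hconn => by
  obtain ⟨d, -, hd₁, hd₂⟩ := (hconn.preconnected a b).some.exists_boundary_dart A ha hb
  exact ((L.compl_adj _ _).mp d.adj).2 (hA _ hd₁ _ hd₂)

namespace Multigraph

section Basic

variable {V : Type u} {E : Type v} (G : Multigraph V E)

theorem other_ne (s : V) (e : E) : G.other s e ≠ s := by
  unfold other
  split_ifs with hfst
  · exact fun hsnd => G.loopless e (hfst.trans hsnd.symm)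
  · exact hfst

theorem inc_other {s : V} {e : E} (h : G.IncVert s e) : G.Inc e s (G.other s e) := by
  unfold other
  split_ifs with hfst
  · exact Or.inl ⟨hfst, rfl⟩
  · exact Or.inr ⟨rfl, h.resolve_left hfst⟩

variable {G}

theorem Inc.symm {e : E} {a b : V} (h : G.Inc e a b) : G.Inc e b a := Or.symm h

theorem Inc.mem_edgeCut {S : Set V} {e : E} {a b : V} (h : G.Inc e a b) (ha : a ∈ S)
    (hb : b ∉ S) : e ∈ G.edgeCut S := by
  rcases h with ⟨rfl, rfl⟩ | ⟨rfl, rfl⟩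
  · exact Or.inl ⟨ha, hb⟩
  · exact Or.inr ⟨hb, ha⟩

variable (G) in
theorem edgeCut_compl (S : Set V) : G.edgeCut Sᶜ = G.edgeCut S := by
  ext e
  simp only [edgeCut, Set.mem_ofPred_eq, Set.mem_compl_iff, not_not]
  tauto

theorem mem_edgeCut_iff_other_mem {s : V} {e : E} {S : Set V} (he : G.IncVert s e)
    (hs : s ∉ S) : e ∈ G.edgeCut S ↔ G.other s e ∈ S := by
  refine ⟨fun hcut => ?_, fun ho => (inc_other G he).symm.mem_edgeCut ho hs⟩
  rcases inc_other G he with ⟨h₁, h₂⟩ | ⟨h₁, h₂⟩ <;> rcases hcut with ⟨w₁, w₂⟩ | ⟨w₁, w₂⟩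
  exacts [absurd (h₁ ▸ w₁) hs, h₂ ▸ w₂, h₁ ▸ w₁, absurd (h₂ ▸ w₂) hs]

namespace Walk

def AllSteps (P : E → V → V → Prop) : ∀ {x y : V}, G.Walk x y → Prop
  | _, _, .nil _ => True
  | _, _, .cons (x := a) (y := b) e _ p => P e a b ∧ p.AllSteps P

variable {P Q : E → V → V → Prop} {x y : V}

theorem allSteps_cons {a b : V} {e : E} (he : G.Inc e a b) (p : G.Walk b y) :
    (Walk.cons e he p).AllSteps P ↔ P e a b ∧ p.AllSteps P := Iff.rfl

theorem AllSteps.imp (hPQ : ∀ e a b, P e a b → Q e a b) :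
    ∀ {x y : V} {p : G.Walk x y}, p.AllSteps P → p.AllSteps Q
  | _, _, .nil _, _ => trivial
  | _, _, .cons _ _ _, h => (allSteps_cons _ _).mpr ⟨hPQ _ _ _ h.1, h.2.imp hPQ⟩

theorem AllSteps.exists_of_mem_edges : ∀ {x y : V} {p : G.Walk x y}, p.AllSteps P →
    ∀ {e : E}, e ∈ p.edges → ∃ a b, P e a b
  | _, _, .nil _, _, _, he => absurd he List.not_mem_nil
  | _, _, .cons _ _ _, h, _, he => by
    rcases List.mem_cons.mp he with rfl | he
    exacts [⟨_, _, h.1⟩, h.2.exists_of_mem_edges he]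

theorem start_mem_support : ∀ {x y : V} (p : G.Walk x y), x ∈ p.support
  | _, _, .nil _ => List.mem_singleton_self _
  | _, _, .cons _ _ _ => List.mem_cons_self

theorem endpoints_mem_support : ∀ {x y : V} (p : G.Walk x y) {e : E}, e ∈ p.edges →
    G.fst e ∈ p.support ∧ G.snd e ∈ p.support
  | _, _, .nil _, _, he => absurd he List.not_mem_nil
  | _, _, .cons f hf p, e, he => by
    rcases List.mem_cons.mp he with rfl | he
    · rcases hf with ⟨rfl, rfl⟩ | ⟨rfl, rfl⟩
      · exact ⟨List.mem_cons_self, List.mem_cons_of_mem _ (start_mem_support p)⟩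
      · exact ⟨List.mem_cons_of_mem _ (start_mem_support p), List.mem_cons_self⟩
    · exact (endpoints_mem_support p he).imp (List.mem_cons_of_mem _) (List.mem_cons_of_mem _)

theorem IsPath.edges_nodup : ∀ {x y : V} {p : G.Walk x y}, p.IsPath → p.edges.Nodup
  | _, _, .nil _, _ => List.nodup_nil
  | _, _, .cons e he p, hp => by
    obtain ⟨hx, hp⟩ := List.nodup_cons.mp hp
    refine List.nodup_cons.mpr ⟨fun hmem => ?_, IsPath.edges_nodup hp⟩
    obtain ⟨h₁, h₂⟩ := endpoints_mem_support p hmem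
    rcases he with ⟨rfl, _⟩ | ⟨_, rfl⟩
    exacts [hx h₁, hx h₂]

theorem exists_mem_edges_mem_edgeCut {S : Set V} :
    ∀ {x y : V} (p : G.Walk x y), x ∈ S → y ∉ S → ∃ e ∈ p.edges, e ∈ G.edgeCut S
  | _, _, .nil _, hx, hy => absurd hx hy
  | _, _, .cons (y := m) e he p, hx, hy => by
    by_cases hm : m ∈ S
    · obtain ⟨f, hf, hcut⟩ := exists_mem_edges_mem_edgeCut p hm hy
      exact ⟨f, List.mem_cons_of_mem _ hf, hcut⟩
    · exact ⟨e, List.mem_cons_self, he.mem_edgeCut hx hm⟩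

theorem exists_suffix_of_mem_support {u : V} : ∀ {x y : V} (p : G.Walk x y), u ∈ p.support →
    ∃ q : G.Walk u y, q.support.Sublist p.support ∧ (p.AllSteps P → q.AllSteps P)
  | _, _, .nil _, hu => by
    obtain rfl := List.mem_singleton.mp hu
    exact ⟨.nil _, List.Sublist.refl _, id⟩
  | x, _, .cons e he p, hu => by
    by_cases hux : u = x
    · subst hux
      exact ⟨.cons e he p, List.Sublist.refl _, id⟩
    · obtain ⟨q, hsub, hall⟩ :=
        exists_suffix_of_mem_support p ((List.mem_cons.mp hu).resolve_left hux)
      exact ⟨q, hsub.trans (List.sublist_cons_self _ _), fun h => hall h.2⟩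

theorem exists_isPath_allSteps
    (h : Relation.ReflTransGen (fun a b => ∃ e, G.Inc e a b ∧ P e a b) x y) :
    ∃ p : G.Walk x y, p.IsPath ∧ p.AllSteps P := by
  induction h using Relation.ReflTransGen.head_induction_on with
  | refl => exact ⟨.nil y, List.nodup_singleton _, trivial⟩
  | @head a m hstep _ ih =>
    obtain ⟨e, he, hPe⟩ := hstep
    obtain ⟨q, hq, hqP⟩ := ih
    by_cases ha : a ∈ q.support
    · obtain ⟨q', hsub, hall⟩ := exists_suffix_of_mem_support q ha
      exact ⟨q', hsub.nodup hq, hall hqP⟩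
    · exact ⟨.cons e he q, List.nodup_cons.mpr ⟨ha, hq⟩, (allSteps_cons he q).mpr ⟨hPe, hqP⟩⟩

end Walk

theorem EdgeDisjointPaths.le_ncard_edgeCut [Finite E] {S : Set V} {a b : V} {k : ℕ}
    (hP : G.EdgeDisjointPaths k a b) (ha : a ∈ S) (hb : b ∉ S) :
    k ≤ (G.edgeCut S).ncard := by
  obtain ⟨P, -, hdisj⟩ := hP
  choose f hf hcut using fun i => (P i).exists_mem_edges_mem_edgeCut ha hb
  have hinj : Function.Injective f := fun i j hij => by_contra fun hne =>
    hdisj i j hne (hf i) (hij ▸ hf j)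
  calc k = (Set.range f).ncard := by
        rw [← Nat.card_coe_set_eq, Nat.card_range_of_injective hinj, Nat.card_fin]
    _ ≤ (G.edgeCut S).ncard := Set.ncard_le_ncard (Set.range_subset_iff.mpr hcut)

end Basic

section Flow

variable {V : Type u} {E : Type v} {G : Multigraph V E} {x y : V} {f : E → ℤ}

open Classical

variable (G) in
noncomputable def stepSign (e : E) (a : V) : ℤ := if G.fst e = a then 1 else -1

theorem Inc.stepSign_mul {e : E} {a b : V} (h : G.Inc e a b) (S : Set V) :
    G.stepSign e a * ((if G.fst e ∈ S then 1 else 0) - (if G.snd e ∈ S then 1 else 0)) =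
      (if a ∈ S then 1 else 0) - (if b ∈ S then 1 else 0) := by
  rcases h with ⟨rfl, rfl⟩ | ⟨rfl, rfl⟩
  · simp [stepSign]
  · simp only [stepSign, if_neg (G.loopless e)]
    ring

theorem stepSign_ne_zero (e : E) (a : V) : G.stepSign e a ≠ 0 := by
  unfold stepSign
  split_ifs <;> norm_num

namespace Walk

noncomputable def push (c : ℤ) : ∀ {x y : V}, G.Walk x y → (E → ℤ) → E → ℤ
  | _, _, .nil _, f => f
  | _, _, .cons (x := a) e _ p, f => p.push c (f + Pi.single e (c * G.stepSign e a))

theorem push_of_notMem (c : ℤ) : ∀ {x y : V} (p : G.Walk x y) (f : E → ℤ) {e : E},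
    e ∉ p.edges → p.push c f e = f e
  | _, _, .nil _, _, _, _ => rfl
  | _, _, .cons e' _ p, f, e, he => by
    have hne : e ≠ e' := fun h => he (h ▸ List.mem_cons_self)
    rw [push, push_of_notMem c p _ fun h => he (List.mem_cons_of_mem _ h)]
    simp [hne]

theorem push_of_mem {P : E → V → V → Prop} (c : ℤ) : ∀ {x y : V} (p : G.Walk x y),
    p.edges.Nodup → p.AllSteps P → ∀ (f : E → ℤ) {e : E}, e ∈ p.edges →
      ∃ a b, P e a b ∧ p.push c f e = f e + c * G.stepSign e a
  | _, _, .nil _, _, _, _, _, he => absurd he List.not_mem_nil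
  | a, b, .cons e' _ p, hnd, hP, f, e, he => by
    obtain ⟨he'p, hnd⟩ := List.nodup_cons.mp hnd
    rcases List.mem_cons.mp he with rfl | he
    · refine ⟨a, _, hP.1, ?_⟩
      rw [push, push_of_notMem c p _ he'p]
      simp
    · obtain ⟨a', b', hPe, hpush⟩ := push_of_mem c p hnd hP.2 _ he
      have hne : e ≠ e' := fun h => he'p (h ▸ he)
      refine ⟨a', b', hPe, ?_⟩
      rw [push, hpush]
      simp [hne]

end Walk

variable (G) in
def ReachableBy (P : E → V → V → Prop) : V → V → Prop :=
  Relation.ReflTransGen fun a b => ∃ e, G.Inc e a b ∧ P e a b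

theorem ReachableBy.tail {P : E → V → V → Prop} {e : E} {a b : V} (h : G.ReachableBy P x a)
    (he : G.Inc e a b) (hP : P e a b) : G.ReachableBy P x b :=
  Relation.ReflTransGen.tail h ⟨e, he, hP⟩

variable (G) in
def ResidualStep (f : E → ℤ) (e : E) (a _ : V) : Prop := |f e + G.stepSign e a| ≤ 1

variable (G) in
def FlowStep (f : E → ℤ) (e : E) (a _ : V) : Prop := f e = G.stepSign e a

theorem ite_mem_edgeCut_le_of_residualStep_closed {S : Set V}
    (hS : ∀ e a b, a ∈ S → G.Inc e a b → G.ResidualStep f e a b → b ∈ S) {e : E}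
    (hfe : |f e| ≤ 1) :
    (if e ∈ G.edgeCut S then 1 else 0) ≤
      f e * ((if G.fst e ∈ S then 1 else 0) - (if G.snd e ∈ S then 1 else 0)) := by
  have hfst := fun h => hS e _ _ h (Or.inl ⟨rfl, rfl⟩)
  have hsnd := fun h => hS e _ _ h (Or.inr ⟨rfl, rfl⟩)
  simp only [ResidualStep, stepSign, if_neg (G.loopless e)] at hfst hsnd
  obtain h | h | h : f e = -1 ∨ f e = 0 ∨ f e = 1 := by have := abs_le.mp hfe; omega
  all_goals by_cases h₁ : G.fst e ∈ S <;> by_cases h₂ : G.snd e ∈ S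
  all_goals simp_all [edgeCut]

section UnitFlow

variable [Fintype E]

variable (G) in
/-- The net flow out of `S`, where `f e` units travel along `e` from `fst e` to `snd e`
(backwards if `f e < 0`). -/
noncomputable def outflow (f : E → ℤ) (S : Set V) : ℤ :=
  ∑ e, f e * ((if G.fst e ∈ S then 1 else 0) - (if G.snd e ∈ S then 1 else 0))

variable (G) in
structure IsUnitFlow (x y : V) (f : E → ℤ) : Prop where
  abs_le_one : ∀ e, |f e| ≤ 1
  outflow_singleton : ∀ v, v ≠ x → v ≠ y → G.outflow f {v} = 0

theorem outflow_add_single (f : E → ℤ) (e : E) (c : ℤ) (S : Set V) :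
    G.outflow (f + Pi.single e c) S = G.outflow f S +
      c * ((if G.fst e ∈ S then 1 else 0) - (if G.snd e ∈ S then 1 else 0)) := by
  simp [outflow, add_mul, Finset.sum_add_distrib, Pi.single_apply, ite_mul]

theorem Walk.outflow_push (c : ℤ) (S : Set V) : ∀ {x y : V} (p : G.Walk x y) (f : E → ℤ),
    G.outflow (p.push c f) S =
      G.outflow f S + c * ((if x ∈ S then 1 else 0) - (if y ∈ S then 1 else 0))
  | _, _, .nil _, f => by simp [push]
  | _, _, .cons e he p, f => by
    rw [push, outflow_push c S p, outflow_add_single, mul_assoc, he.stepSign_mul]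
    ring

theorem outflow_le_card {f : E → ℤ} (hf : ∀ e, |f e| ≤ 1) (S : Set V) :
    G.outflow f S ≤ Fintype.card E := by
  rw [outflow, ← nsmul_one, ← Finset.card_univ, ← Finset.sum_const]
  refine Finset.sum_le_sum fun e _ => ?_
  have := abs_le.mp (hf e)
  split_ifs <;> nlinarith

theorem outflow_eq_sum [Fintype V] (f : E → ℤ) (S : Set V) :
    G.outflow f S = ∑ v ∈ S.toFinset, G.outflow f {v} := by
  simp only [outflow, Set.mem_singleton_iff]
  rw [Finset.sum_comm]
  refine Finset.sum_congr rfl fun e _ => ?_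
  rw [← Finset.mul_sum, Finset.sum_sub_distrib, Finset.sum_ite_eq, Finset.sum_ite_eq]
  simp

theorem IsUnitFlow.outflow_eq [Fintype V] (hf : G.IsUnitFlow x y f) {S : Set V}
    (hx : x ∈ S) (hy : y ∉ S) : G.outflow f S = G.outflow f {x} := by
  rw [outflow_eq_sum, Finset.sum_eq_single_of_mem x (Set.mem_toFinset.mpr hx)]
  intro v hv hvx
  exact hf.outflow_singleton v hvx fun hvy => hy (hvy ▸ Set.mem_toFinset.mp hv)

theorem IsUnitFlow.push (hf : G.IsUnitFlow x y f) {c : ℤ} {p : G.Walk x y} (hp : p.IsPath)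
    (hcap : p.AllSteps fun e a _ => |f e + c * G.stepSign e a| ≤ 1) :
    G.IsUnitFlow x y (p.push c f) where
  abs_le_one e := by
    by_cases he : e ∈ p.edges
    · obtain ⟨a, b, hab, hpush⟩ := p.push_of_mem c hp.edges_nodup hcap f he
      exact hpush ▸ hab
    · exact p.push_of_notMem c f he ▸ hf.abs_le_one e
  outflow_singleton v hvx hvy := by
    simp [Walk.outflow_push, hf.outflow_singleton v hvx hvy, Ne.symm hvx, Ne.symm hvy]

theorem outflow_nonpos_of_flowStep_closed {S : Set V}
    (hS : ∀ e a b, a ∈ S → G.Inc e a b → G.FlowStep f e a b → b ∈ S)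
    (hf : ∀ e, |f e| ≤ 1) : G.outflow f S ≤ 0 := by
  refine Finset.sum_nonpos fun e _ => ?_
  have hfst := fun h => hS e _ _ h (Or.inl ⟨rfl, rfl⟩)
  have hsnd := fun h => hS e _ _ h (Or.inr ⟨rfl, rfl⟩)
  simp only [FlowStep, stepSign, if_neg (G.loopless e)] at hfst hsnd
  obtain h | h | h : f e = -1 ∨ f e = 0 ∨ f e = 1 := by have := abs_le.mp (hf e); omega
  all_goals by_cases h₁ : G.fst e ∈ S <;> by_cases h₂ : G.snd e ∈ S
  all_goals simp_all

theorem le_outflow_of_residualStep_closed {S : Set V}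
    (hS : ∀ e a b, a ∈ S → G.Inc e a b → G.ResidualStep f e a b → b ∈ S)
    (hf : ∀ e, |f e| ≤ 1) : ((G.edgeCut S).ncard : ℤ) ≤ G.outflow f S := by
  rw [Set.ncard_eq_sum_ite, Nat.cast_sum]
  exact Finset.sum_le_sum fun e _ => by
    push_cast
    exact ite_mem_edgeCut_le_of_residualStep_closed hS (hf e)

theorem IsUnitFlow.reachableBy_flowStep [Fintype V] (hf : G.IsUnitFlow x y f)
    (hpos : 1 ≤ G.outflow f {x}) : G.ReachableBy (G.FlowStep f) x y := by
  by_contra hy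
  let S := {v | G.ReachableBy (G.FlowStep f) x v}
  have := hf.outflow_eq (S := S) Relation.ReflTransGen.refl hy
  have := outflow_nonpos_of_flowStep_closed (S := S) (fun _ _ _ => ReachableBy.tail)
    hf.abs_le_one
  omega

theorem IsUnitFlow.exists_augment (hf : G.IsUnitFlow x y f) (hxy : x ≠ y)
    (hreach : G.ReachableBy (G.ResidualStep f) x y) :
    ∃ f', G.IsUnitFlow x y f' ∧ G.outflow f' {x} = G.outflow f {x} + 1 := by
  obtain ⟨p, hp, hres⟩ := Walk.exists_isPath_allSteps hreach
  refine ⟨p.push 1 f, hf.push hp (hres.imp fun _ _ _ h => by simpa [ResidualStep] using h), ?_⟩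
  simp [Walk.outflow_push, Ne.symm hxy]

theorem exists_isUnitFlow_not_reachableBy (hxy : x ≠ y) :
    ∃ f, G.IsUnitFlow x y f ∧ ¬ G.ReachableBy (G.ResidualStep f) x y := by
  obtain ⟨m, ⟨f, hf, rfl⟩, hmax⟩ := Int.exists_greatest_of_bdd
    (P := fun z => ∃ f, G.IsUnitFlow x y f ∧ G.outflow f {x} = z)
    ⟨Fintype.card E, fun _ ⟨f, hf, hz⟩ => hz ▸ outflow_le_card hf.abs_le_one _⟩
    ⟨0, 0, ⟨fun _ => by simp, fun _ _ _ => by simp [outflow]⟩, by simp [outflow]⟩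
  refine ⟨f, hf, fun hreach => ?_⟩
  obtain ⟨f', hf', hval⟩ := hf.exists_augment hxy hreach
  have := hmax _ ⟨f', hf', rfl⟩
  omega

theorem IsUnitFlow.le_outflow [Fintype V] (hf : G.IsUnitFlow x y f)
    (hmax : ¬ G.ReachableBy (G.ResidualStep f) x y) {k : ℕ}
    (hcut : ∀ S : Set V, x ∈ S → y ∉ S → k ≤ (G.edgeCut S).ncard) :
    (k : ℤ) ≤ G.outflow f {x} := by
  let S := {v | G.ReachableBy (G.ResidualStep f) x v}
  rw [← hf.outflow_eq (S := S) Relation.ReflTransGen.refl hmax]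
  exact (Int.ofNat_le.mpr (hcut S Relation.ReflTransGen.refl hmax)).trans
    (le_outflow_of_residualStep_closed (fun _ _ _ => ReachableBy.tail) hf.abs_le_one)

theorem IsUnitFlow.exists_edgeDisjoint_paths [Fintype V] (hf : G.IsUnitFlow x y f)
    (hxy : x ≠ y) {k : ℕ} (hk : (k : ℤ) ≤ G.outflow f {x}) :
    ∃ P : Fin k → G.Walk x y, (∀ i, (P i).IsPath) ∧
      (Pairwise fun i j => List.Disjoint (P i).edges (P j).edges) ∧
      ∀ i, ∀ e ∈ (P i).edges, f e ≠ 0 := by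
  induction k generalizing f with
  | zero => exact ⟨Fin.elim0, fun i => Fin.elim0 i, fun i => Fin.elim0 i, fun i => Fin.elim0 i⟩
  | succ k ih =>
    obtain ⟨p, hp, hflow⟩ := Walk.exists_isPath_allSteps (hf.reachableBy_flowStep (by omega))
    have hflow' : p.AllSteps fun e a _ => |f e + -1 * G.stepSign e a| ≤ 1 :=
      hflow.imp fun _ _ _ (h : f _ = _) => by simp [h]
    obtain ⟨P, hP, hdisj, hsupp⟩ := ih (hf.push hp hflow') (by
      simp only [Walk.outflow_push, Set.mem_singleton_iff, if_true, if_neg (Ne.symm hxy)]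
      push_cast at hk
      omega)
    have hp_flow : ∀ e ∈ p.edges, f e ≠ 0 := fun e he => by
      obtain ⟨a, _, h⟩ := hflow.exists_of_mem_edges he
      exact h ▸ stepSign_ne_zero e a
    have hP_notMem : ∀ i, ∀ e ∈ (P i).edges, e ∉ p.edges := fun i e he hep => by
      obtain ⟨a, _, hstep, hpush⟩ := p.push_of_mem (-1) hp.edges_nodup hflow f hep
      exact hsupp i e he (by rw [hpush, hstep]; ring)
    refine ⟨Fin.cons p P, Fin.cases hp hP,
      Fin.pairwise_cons (r := fun p q : G.Walk x y => List.Disjoint p.edges q.edges)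
        (fun i e hep he => hP_notMem i e he hep)
        (fun i e he hep => hP_notMem i e he hep) hdisj,
      Fin.cases hp_flow fun i e he => ?_⟩
    exact p.push_of_notMem (-1) f (hP_notMem i e he) ▸ hsupp i e he

end UnitFlow

theorem edgeDisjointPaths_of_le_ncard_edgeCut [Finite V] [Finite E] (hxy : x ≠ y)
    {k : ℕ} (hcut : ∀ S : Set V, x ∈ S → y ∉ S → k ≤ (G.edgeCut S).ncard) :
    G.EdgeDisjointPaths k x y := by
  have := Fintype.ofFinite V
  have := Fintype.ofFinite E
  obtain ⟨f, hf, hmax⟩ := exists_isUnitFlow_not_reachableBy (G := G) hxy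
  obtain ⟨P, hP, hdisj, -⟩ := hf.exists_edgeDisjoint_paths hxy (hf.le_outflow hmax hcut)
  exact ⟨P, hP, fun i j hij => hdisj hij⟩

end Flow

section CutCounting

variable {V : Type u} {E : Type v} (G : Multigraph V E)

open Classical

theorem even_ncard_edgeCut [Finite V] [Finite E] (heuler : ∀ v, Even (G.degree v)) (S : Set V) :
    Even (G.edgeCut S).ncard := by
  have := Fintype.ofFinite V
  have := Fintype.ofFinite E
  have hdeg : ∀ v, G.degree v =
      ∑ e, ((if G.fst e = v then 1 else 0) + (if G.snd e = v then 1 else 0)) := fun v => by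
    rw [degree, Set.ncard_eq_sum_ite]
    refine Finset.sum_congr rfl fun e _ => ?_
    have := G.loopless e
    by_cases h₁ : G.fst e = v <;> by_cases h₂ : G.snd e = v <;> simp_all [IncVert]
  have hsum : ∑ v ∈ S.toFinset, G.degree v = (G.edgeCut S).ncard +
      2 * ∑ e, (if G.fst e ∈ S ∧ G.snd e ∈ S then 1 else 0) := by
    simp only [hdeg]
    rw [Finset.sum_comm, Set.ncard_eq_sum_ite, Finset.mul_sum, ← Finset.sum_add_distrib]
    refine Finset.sum_congr rfl fun e _ => ?_
    rw [Finset.sum_add_distrib, Finset.sum_ite_eq, Finset.sum_ite_eq]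
    by_cases h₁ : G.fst e ∈ S <;> by_cases h₂ : G.snd e ∈ S <;> simp [edgeCut, h₁, h₂]
  have heven : Even (∑ v ∈ S.toFinset, G.degree v) := Finset.even_sum _ fun v _ => heuler v
  rw [hsum, Nat.even_add] at heven
  exact heven.mpr (even_two_mul _)

theorem ncard_edgeCut_union_add_inter_le [Finite E] (X Y : Set V) :
    (G.edgeCut (X ∪ Y)).ncard + (G.edgeCut (X ∩ Y)).ncard ≤
      (G.edgeCut X).ncard + (G.edgeCut Y).ncard := by
  have := Fintype.ofFinite E
  simp only [Set.ncard_eq_sum_ite, ← Finset.sum_add_distrib]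
  refine Finset.sum_le_sum fun e _ => ?_
  by_cases h₁ : G.fst e ∈ X <;> by_cases h₂ : G.fst e ∈ Y <;>
    by_cases h₃ : G.snd e ∈ X <;> by_cases h₄ : G.snd e ∈ Y <;>
    simp [edgeCut, h₁, h₂, h₃, h₄]

theorem ncard_edgeCut_diff_add_diff_le [Finite E] (X Y : Set V) :
    (G.edgeCut (X \ Y)).ncard + (G.edgeCut (Y \ X)).ncard +
        2 * (G.edgeCut (X ∩ Y) ∩ G.edgeCut (X ∪ Y)).ncard ≤
      (G.edgeCut X).ncard + (G.edgeCut Y).ncard := by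
  have := Fintype.ofFinite E
  simp only [Set.ncard_eq_sum_ite, Finset.mul_sum, ← Finset.sum_add_distrib]
  refine Finset.sum_le_sum fun e _ => ?_
  by_cases h₁ : G.fst e ∈ X <;> by_cases h₂ : G.fst e ∈ Y <;>
    by_cases h₃ : G.snd e ∈ X <;> by_cases h₄ : G.snd e ∈ Y <;>
    simp [edgeCut, h₁, h₂, h₃, h₄]

end CutCounting

section Lift

variable {W F : Type u} {G : Multigraph W F} {s : W} {e₁ e₂ : F}

instance [Finite F] : Finite (G.lift s e₁ e₂).E := by
  unfold lift
  infer_instance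

open Classical in
theorem ncard_edgeCut_lift [Finite F] (S : Set W) :
    ((G.lift s e₁ e₂).graph.edgeCut S).ncard = (G.edgeCut S \ {e₁, e₂}).ncard +
      if Xor (G.other s e₁ ∈ S) (G.other s e₂ ∈ S) then 1 else 0 := by
  let T : Set ({e // e ≠ e₁ ∧ e ≠ e₂} ⊕ {_p : PUnit // G.other s e₁ ≠ G.other s e₂}) :=
    (G.lift s e₁ e₂).graph.edgeCut S
  change T.ncard = _
  have hinl : Subtype.val '' (Sum.inl ⁻¹' T) = G.edgeCut S \ {e₁, e₂} := by
    ext e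
    simp [T, edgeCut, lift, and_comm]
  have hinr : (Sum.inr ⁻¹' T).ncard =
      if Xor (G.other s e₁ ∈ S) (G.other s e₂ ∈ S) then 1 else 0 := by
    have hT : Sum.inr ⁻¹' T = {_p | Xor (G.other s e₁ ∈ S) (G.other s e₂ ∈ S)} := by
      ext p
      simp [T, edgeCut, lift, Xor, and_comm]
    split_ifs with hxor
    · have hne : G.other s e₁ ≠ G.other s e₂ := fun h => by
        rw [h, xor_self] at hxor
        exact hxor
      rw [hT, Set.ncard_eq_one]
      exact ⟨⟨PUnit.unit, hne⟩, Set.eq_singleton_iff_unique_mem.mpr ⟨hxor, fun _ _ => rfl⟩⟩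
    · simp [hT, hxor]
  rw [← Set.image_preimage_inl_union_image_preimage_inr T,
    Set.ncard_union_eq Set.disjoint_image_inl_image_inr,
    Set.ncard_image_of_injective _ Sum.inl_injective,
    Set.ncard_image_of_injective _ Sum.inr_injective, ← hinl,
    Set.ncard_image_of_injective _ Subtype.val_injective, hinr]

open Classical in
theorem ncard_edgeCut_le_lift_add [Finite F] {S : Set W} (hs : s ∉ S) (h₁ : G.IncVert s e₁)
    (h₂ : G.IncVert s e₂) :
    (G.edgeCut S).ncard ≤ ((G.lift s e₁ e₂).graph.edgeCut S).ncard +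
      if G.other s e₁ ∈ S ∧ G.other s e₂ ∈ S then 2 else 0 := by
  have hsub : G.edgeCut S ∩ {e₁, e₂} ⊆
      {e | e = e₁ ∧ G.other s e₁ ∈ S ∨ e = e₂ ∧ G.other s e₂ ∈ S} := by
    rintro e ⟨he, rfl | rfl⟩
    · exact Or.inl ⟨rfl, (mem_edgeCut_iff_other_mem h₁ hs).mp he⟩
    · exact Or.inr ⟨rfl, (mem_edgeCut_iff_other_mem h₂ hs).mp he⟩
  have hcard := Set.ncard_le_ncard hsub
  have hpair : (G.edgeCut S ∩ {e₁, e₂}).ncard ≤ 2 :=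
    (Set.ncard_le_ncard Set.inter_subset_right).trans ((Set.ncard_insert_le _ _).trans (by simp))
  rw [ncard_edgeCut_lift, ← Set.ncard_inter_add_ncard_sdiff_eq_ncard (G.edgeCut S) {e₁, e₂}]
  by_cases ho₁ : G.other s e₁ ∈ S <;> by_cases ho₂ : G.other s e₂ ∈ S <;>
    simp only [ho₁, ho₂, and_true, and_false, or_false, false_or, Set.ofPred_eq_eq_singleton,
      Set.ncard_singleton, Set.ofPred_false, Set.ncard_empty] at hcard <;>
    simp [Xor, ho₁, ho₂] <;> omega

end Lift

section Lifting

variable {V E : Type u} {G : Multigraph V E} {s : V} {k : ℕ}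

def IsNontrivialOff (s : V) (S : Set V) : Prop :=
  s ∉ S ∧ S.Nonempty ∧ ∃ q, q ∉ S ∧ q ≠ s

variable (G s k) in
def IsTight (S : Set V) : Prop :=
  IsNontrivialOff s S ∧ (G.edgeCut S).ncard ≤ k + 1

theorem IsNontrivialOff.le_ncard_edgeCut [Finite E] (hconn : G.SEdgeConnected s k)
    {S : Set V} (hS : IsNontrivialOff s S) : k ≤ (G.edgeCut S).ncard := by
  obtain ⟨hs, ⟨p, hp⟩, q, hq, hqs⟩ := hS
  exact (hconn p q (fun h => hs (h ▸ hp)) hqs fun h => hq (h ▸ hp)).le_ncard_edgeCut hp hq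

theorem isLiftable_of_forall_not_isTight [Finite V] [Finite E] (hconn : G.SEdgeConnected s k)
    {e₁ e₂ : E} (hne : e₁ ≠ e₂) (h₁ : G.IncVert s e₁) (h₂ : G.IncVert s e₂)
    (htight : ∀ S, G.IsTight s k S → ¬(G.other s e₁ ∈ S ∧ G.other s e₂ ∈ S)) :
    G.IsLiftable s k e₁ e₂ := by
  classical
  refine ⟨hne, h₁, h₂, fun x y hx hy hxy => edgeDisjointPaths_of_le_ncard_edgeCut hxy ?_⟩
  have hcut : ∀ S, IsNontrivialOff s S → k ≤ ((G.lift s e₁ e₂).graph.edgeCut S).ncard := by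
    intro S hS
    have hlift := ncard_edgeCut_le_lift_add hS.1 h₁ h₂
    have hk := hS.le_ncard_edgeCut hconn
    split_ifs at hlift with hboth
    · have : k + 1 < (G.edgeCut S).ncard := not_le.mp fun h => htight S ⟨hS, h⟩ hboth
      omega
    · omega
  intro S hxS hyS
  by_cases hsS : s ∈ S
  · rw [← edgeCut_compl]
    exact hcut Sᶜ ⟨not_not.mpr hsS, ⟨y, hyS⟩, x, not_not.mpr hxS, hx⟩
  · exact hcut S ⟨hsS, ⟨x, hxS⟩, y, hyS, hy⟩

theorem ncard_edgeCut_insert_add_degree [Finite E] {X : Set V} (hs : s ∉ X)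
    (hX : ∀ e, G.IncVert s e → G.other s e ∈ X) :
    (G.edgeCut (insert s X)).ncard + G.degree s = (G.edgeCut X).ncard := by
  have hedge : ∀ e, ¬(e ∈ G.edgeCut (insert s X) ∧ G.IncVert s e) ∧
      (e ∈ G.edgeCut (insert s X) ∨ G.IncVert s e ↔ e ∈ G.edgeCut X) := by
    intro e
    by_cases he : G.IncVert s e
    · have ho := hX e he
      have hos := G.other_ne s e
      rcases inc_other G he with ⟨h₁, h₂⟩ | ⟨h₁, h₂⟩ <;>
        simp only [edgeCut, Set.mem_ofPred_eq, Set.mem_insert_iff, h₁, h₂] <;> tauto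
    · simp only [IncVert, not_or] at he
      simp [edgeCut, IncVert, he]
  have hdisj : Disjoint (G.edgeCut (insert s X)) {e | G.IncVert s e} :=
    Set.disjoint_left.mpr fun e h₁ h₂ => (hedge e).1 ⟨h₁, h₂⟩
  rw [degree, ← Set.ncard_union_eq hdisj]
  exact congrArg Set.ncard (Set.ext fun e => (hedge e).2)

theorem IsTight.exists_other_notMem [Finite E] (hconn : G.SEdgeConnected s k)
    (hdeg : 2 ≤ G.degree s) {X : Set V} (hX : G.IsTight s k X) :
    ∃ e, G.IncVert s e ∧ G.other s e ∉ X := by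
  by_contra! hall
  obtain ⟨hs, ⟨x, hx⟩, q, hq, hqs⟩ := hX.1
  have hY : IsNontrivialOff s (insert s X)ᶜ :=
    ⟨fun h => h (Set.mem_insert _ _), ⟨q, by simp [hq, hqs]⟩, x, by simp [hx],
      fun h => hs (h ▸ hx)⟩
  have := hY.le_ncard_edgeCut hconn
  rw [edgeCut_compl] at this
  have := ncard_edgeCut_insert_add_degree hs hall
  have := hX.2
  omega

section Eulerian

variable [Finite V] [Finite E] (heuler : ∀ v, Even (G.degree v)) (hconn : G.SEdgeConnected s k)
include heuler hconn

theorem IsTight.union {X Z : Set V} (hX : G.IsTight s k X) (hZ : G.IsTight s k Z)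
    (hXZ : (X ∩ Z).Nonempty) (hout : ∃ t, t ∉ X ∪ Z ∧ t ≠ s) : G.IsTight s k (X ∪ Z) := by
  obtain ⟨t, ht, hts⟩ := hout
  have hU : IsNontrivialOff s (X ∪ Z) :=
    ⟨fun h => h.elim hX.1.1 hZ.1.1, hX.1.2.1.mono Set.subset_union_left, t, ht, hts⟩
  have hI : IsNontrivialOff s (X ∩ Z) :=
    ⟨fun h => hX.1.1 h.1, hXZ, t, fun h => ht (Or.inl h.1), hts⟩
  refine ⟨hU, ?_⟩
  have hsub := G.ncard_edgeCut_union_add_inter_le X Z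
  have := hU.le_ncard_edgeCut hconn
  have := hI.le_ncard_edgeCut hconn
  obtain ⟨a, ha⟩ := G.even_ncard_edgeCut heuler X
  obtain ⟨b, hb⟩ := G.even_ncard_edgeCut heuler Z
  obtain ⟨c, hc⟩ := G.even_ncard_edgeCut heuler (X ∪ Z)
  obtain ⟨d, hd⟩ := G.even_ncard_edgeCut heuler (X ∩ Z)
  have := hX.2
  have := hZ.2
  omega

theorem IsTight.disjoint_edgeCut_inter_union {X Z : Set V} (hX : G.IsTight s k X)
    (hZ : G.IsTight s k Z) (hXZ : IsNontrivialOff s (X \ Z)) (hZX : IsNontrivialOff s (Z \ X)) :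
    Disjoint (G.edgeCut (X ∩ Z)) (G.edgeCut (X ∪ Z)) := by
  rw [Set.disjoint_iff_inter_eq_empty, ← Set.ncard_eq_zero]
  have hsub := G.ncard_edgeCut_diff_add_diff_le X Z
  have := hXZ.le_ncard_edgeCut hconn
  have := hZX.le_ncard_edgeCut hconn
  obtain ⟨a, ha⟩ := G.even_ncard_edgeCut heuler X
  obtain ⟨b, hb⟩ := G.even_ncard_edgeCut heuler Z
  obtain ⟨c, hc⟩ := G.even_ncard_edgeCut heuler (X \ Z)
  obtain ⟨d, hd⟩ := G.even_ncard_edgeCut heuler (Z \ X)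
  have := hX.2
  have := hZ.2
  omega

theorem isLiftable_of_maximal_isTight {X : Set V} (hX : Maximal (G.IsTight s k) X) {e₁ e₂ : E}
    (h₁ : G.IncVert s e₁) (h₂ : G.IncVert s e₂) (ho₁ : G.other s e₁ ∈ X)
    (ho₂ : G.other s e₂ ∉ X) : G.IsLiftable s k e₁ e₂ := by
  refine isLiftable_of_forall_not_isTight hconn (fun h => ho₂ (h ▸ ho₁)) h₁ h₂ ?_
  rintro Z hZ ⟨hZ₁, hZ₂⟩
  by_cases hout : ∃ t, t ∉ X ∪ Z ∧ t ≠ s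
  · have hU := hX.prop.union heuler hconn hZ ⟨_, ho₁, hZ₁⟩ hout
    exact ho₂ (hX.2 hU Set.subset_union_left (Or.inr hZ₂))
  · push Not at hout
    have hXZ : IsNontrivialOff s (X \ Z) := by
      refine ⟨fun h => hX.prop.1.1 h.1, ?_, _, fun h => ho₂ h.1, G.other_ne s e₂⟩
      obtain ⟨-, -, q, hq, hqs⟩ := hZ.1
      by_contra hempty
      exact hqs (hout q fun h => h.elim (fun hqX => hempty ⟨q, hqX, hq⟩) hq)
    have hZX : IsNontrivialOff s (Z \ X) :=
      ⟨fun h => hZ.1.1 h.1, ⟨_, hZ₂, ho₂⟩, _, fun h => h.2 ho₁, G.other_ne s e₁⟩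
    have hs : s ∉ X ∪ Z := fun h => h.elim hX.prop.1.1 hZ.1.1
    exact Set.disjoint_left.mp (hX.prop.disjoint_edgeCut_inter_union heuler hconn hZ hXZ hZX)
      ((mem_edgeCut_iff_other_mem h₁ fun h => hs (Or.inl h.1)).mpr ⟨ho₁, hZ₁⟩)
      ((mem_edgeCut_iff_other_mem h₁ hs).mpr (Or.inl ho₁))

theorem exists_isLiftable_bipartition (hdeg : 2 ≤ G.degree s) :
    ∃ A : Set {e // G.IncVert s e}, A.Nonempty ∧ Aᶜ.Nonempty ∧
      ∀ p ∈ A, ∀ q ∉ A, G.IsLiftable s k p q := by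
  by_cases h : ∃ X e, G.IsTight s k X ∧ G.IncVert s e ∧ G.other s e ∈ X
  · obtain ⟨X₀, e₀, hX₀, he₀, ho₀⟩ := h
    obtain ⟨X, hX₀X, hX⟩ := Finite.exists_le_maximal (p := G.IsTight s k) hX₀
    obtain ⟨e₁, he₁, ho₁⟩ := hX.prop.exists_other_notMem hconn hdeg
    exact ⟨{p | G.other s p ∈ X}, ⟨⟨e₀, he₀⟩, hX₀X ho₀⟩, ⟨⟨e₁, he₁⟩, ho₁⟩,
      fun p hp q hq => isLiftable_of_maximal_isTight heuler hconn hX p.2 q.2 hp hq⟩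
  · push Not at h
    obtain ⟨a, b, ha, hb, hab⟩ := (Set.one_lt_ncard_iff (Set.toFinite _)).mp hdeg
    refine ⟨{⟨a, ha⟩}, ⟨_, rfl⟩, ⟨⟨b, hb⟩, fun h => hab (congrArg Subtype.val h).symm⟩, ?_⟩
    rintro p rfl q hq
    exact isLiftable_of_forall_not_isTight hconn (fun h => hq (Subtype.ext h).symm) ha q.2
      fun S hS ho => h S a hS ha ho.1

end Eulerian

end Lifting

end Multigraph

theorem liftingGraph_compl_disconnected_of_eulerian_general {V E : Type} [Finite V] [Finite E]
    (G : Multigraph V E) (s : V) (k : ℕ)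
    (heuler : ∀ v : V, Even (G.degree v)) (hconn : G.SEdgeConnected s k)
    (hdeg : 2 ≤ G.degree s) :
    ¬ (G.liftingGraph s k)ᶜ.Connected := by
  obtain ⟨A, ⟨a, ha⟩, ⟨b, hb⟩, hlift⟩ := Multigraph.exists_isLiftable_bipartition heuler hconn hdeg
  refine SimpleGraph.not_connected_compl_of_forall_adj ha hb fun p hp q hq => ?_
  exact (SimpleGraph.fromRel_adj _ _ _).mpr ⟨fun h => hq (h ▸ hp), Or.inl (hlift p hp q hq)⟩

/-- Thomassen. Let `k ≥ 2` and let `G` be a finite Eulerian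
`(s,k)`-edge-connected graph with `deg(s) ≥ 2`. Then the complement of the lifting graph
`L(G, s, k)` is disconnected. -/
theorem liftingGraph_compl_disconnected_of_eulerian {V E : Type} [Finite V] [Finite E]
    (G : Multigraph V E) (s : V) (k : ℕ) (hk : 2 ≤ k)
    (heuler : ∀ v : V, Even (G.degree v)) (hconn : G.SEdgeConnected s k)
    (hdeg : 2 ≤ G.degree s) :
    ¬ (G.liftingGraph s k)ᶜ.Connected :=
  liftingGraph_compl_disconnected_of_eulerian_general G s k heuler hconn hdeg
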